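/- arXiv:math-ph/0502041 — 4 statements merged into one kernel-verified Lean document; each statement's English description precedes it below -/
import Mathlib

section
/- Combining both particle-hole transformations: E_Λ^U(|Λ| - N_e, ω̄) = E_Λ^U(N_e, ω) + U(N_e + N_c(ω) - |Λ|), where ω̄_x = 1 - ω_x. -/
/-!
Conjugating by the diagonal sublattice sign `ε x = (-1) ^ (x₁ + ⋯ + x_d)` reverses the sign of the
nearest-neighbour hopping, and `ω̄ = 1 - ω` turns the potential `-U ω̄` into `U ω - U`, so
`ε h^U(ω̄) ε = -h^U(ω) - U`. Hence the increasingly ordered eigenvalues satisfy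
`μ1 j = -μ2 (n - 1 - j) - U`: the `n - N_e` smallest eigenvalues of `h^U(ω̄)` are `-U` minus the
`n - N_e` largest ones of `h^U(ω)`, and those add up to
`tr h^U(ω) - E^U(N_e, ω) = -U N_c(ω) - E^U(N_e, ω)`.
-/

open Finset

/-- Nearest-neighbor hopping matrix element on `ℤ^d`: `1` if `|x-y| = 1`, else `0`. -/
noncomputable def hop (d : ℕ) (x y : Fin d → ℤ) : ℝ :=
  if (∑ i, (x i - y i) ^ 2) = 1 then 1 else 0

/-- Falicov-Kimball one-body Hamiltonian on `ℓ²(Λ)`: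
`h^U_{xy}(ω) = -t_{xy} - U ω_x δ_{xy}`. -/
noncomputable def fkh (d : ℕ) (U : ℝ) (Λ : Finset (Fin d → ℤ))
    (ω : (Fin d → ℤ) → ℕ) : Matrix Λ Λ ℝ :=
  Matrix.of fun x y =>
    -hop d (x : Fin d → ℤ) (y : Fin d → ℤ)
      - U * (ω (x : Fin d → ℤ) : ℝ) * (if x = y then 1 else 0)

lemma Fin.sum_rev_castLE_eq_sub {M : Type*} [AddCommGroup M] {n N : ℕ} (hN : N ≤ n)
    (f : Fin n → M) :
    ∑ j : Fin (n - N), f (Fin.castLE (Nat.sub_le n N) j).rev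
      = ∑ j, f j - ∑ j : Fin N, f (Fin.castLE hN j) := by
  rw [eq_sub_iff_add_eq, ← Fin.sum_congr' f (by omega : N + (n - N) = n), Fin.sum_univ_add,
    add_comm]
  congr 1
  refine Fintype.sum_equiv Fin.revPerm _ _ fun j => congrArg f (Fin.ext ?_)
  simp only [Fin.val_rev, Fin.val_castLE, Fin.revPerm_apply, Fin.val_cast, Fin.val_natAdd]
  omega

lemma Multiset.map_univ_val_comp_equiv {α β γ : Type*} [Fintype α] [Fintype β] (f : β → γ)
    (e : α ≃ β) : univ.val.map (f ∘ e) = univ.val.map f := by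
  rw [← Multiset.map_map, Multiset.map_univ_val_equiv]

lemma Monotone.eq_of_map_univ_val_eq {α : Type*} [LinearOrder α] {n : ℕ} {f g : Fin n → α}
    (hf : Monotone f) (hg : Monotone g) (h : univ.val.map f = univ.val.map g) : f = g := by
  refine List.ofFn_injective (List.Perm.eq_of_sortedLE hf.sortedLE_ofFn hg.sortedLE_ofFn ?_)
  rwa [← Multiset.coe_eq_coe, ← Fin.univ_val_map, ← Fin.univ_val_map]

lemma Matrix.charpoly_mul_mul_of_mul_self_eq_one {n R : Type*} [Fintype n] [DecidableEq n]
    [CommRing R] {D : Matrix n n R} (hD : D * D = 1) (B : Matrix n n R) :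
    (D * B * D).charpoly = B.charpoly := by
  rw [Matrix.mul_assoc, Matrix.charpoly_mul_comm, Matrix.mul_assoc, hD, Matrix.mul_one]

section Hermitian

variable {m n : Type*} [Fintype m] [Fintype n] [DecidableEq n] {A : Matrix n n ℝ}

lemma Matrix.IsHermitian.roots_charpoly_eq_map (hA : A.IsHermitian) {μ : m → ℝ} (e : m ≃ n)
    (he : ∀ j, μ j = hA.eigenvalues (e j)) :
    A.charpoly.roots = univ.val.map μ := by
  rw [hA.roots_charpoly_eq_eigenvalues, show μ = hA.eigenvalues ∘ e from funext he,
    Multiset.map_univ_val_comp_equiv]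
  simp

lemma Matrix.IsHermitian.roots_charpoly_neg_sub_smul_one_eq_map (hA : A.IsHermitian) (c : ℝ)
    {μ : m → ℝ} (e : m ≃ n) (he : ∀ j, μ j = hA.eigenvalues (e j)) :
    (-A - c • 1).charpoly.roots = univ.val.map fun j => -μ j - c := by
  have hcfc : cfc (fun x => -x - c) A = -A - c • 1 := by
    rw [cfc_sub _ _ A, cfc_neg_id A, cfc_const c A, Algebra.algebraMap_eq_smul_one]
  rw [← hcfc, hA.charpoly_cfc_eq, show (fun j => -μ j - c) = (fun i => -hA.eigenvalues i - c) ∘ e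
    from funext fun j => by simp [he], Multiset.map_univ_val_comp_equiv]
  simpa using Polynomial.roots_multiset_prod_X_sub_C (univ.val.map fun i => -hA.eigenvalues i - c)

end Hermitian

noncomputable def sublatticeSign {d : ℕ} (v : Fin d → ℤ) : ℝ :=
  (-1) ^ (∑ i, v i)

lemma sublatticeSign_mul_self {d : ℕ} (v : Fin d → ℤ) :
    sublatticeSign v * sublatticeSign v = 1 := by
  rw [sublatticeSign, ← zpow_add₀ (by norm_num)]
  exact Even.neg_one_zpow ⟨_, rfl⟩

lemma odd_sum_sub_of_sum_sq_sub_eq_one {d : ℕ} {x y : Fin d → ℤ}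
    (h : ∑ i, (x i - y i) ^ 2 = 1) : Odd (∑ i, x i - ∑ i, y i) := by
  have hpar : Even (∑ i, (x i - y i) ^ 2 - ∑ i, (x i - y i)) := by
    rw [← Finset.sum_sub_distrib]
    refine Finset.even_sum _ fun i _ => ?_
    rw [sq, ← mul_sub_one]
    exact Int.even_mul_pred_self _
  rw [h, Int.even_sub] at hpar
  rw [← Finset.sum_sub_distrib, ← Int.not_even_iff_odd, ← hpar]
  decide

lemma sublatticeSign_mul_of_hop_ne_zero {d : ℕ} {x y : Fin d → ℤ} (h : hop d x y ≠ 0) :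
    sublatticeSign x * sublatticeSign y = -1 := by
  have hxy : ∑ i, (x i - y i) ^ 2 = 1 := by
    by_contra hne
    simp [hop, hne] at h
  have hodd : Odd (∑ i, x i + ∑ i, y i) := by
    convert (odd_sum_sub_of_sum_sq_sub_eq_one hxy).add_even (even_two_mul (∑ i, y i)) using 1
    ring
  rw [sublatticeSign, sublatticeSign, ← zpow_add₀ (by norm_num), hodd.neg_one_zpow]

noncomputable def sublatticeSignMatrix (d : ℕ) (Λ : Finset (Fin d → ℤ)) : Matrix Λ Λ ℝ :=
  Matrix.diagonal fun v => sublatticeSign (v : Fin d → ℤ)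

lemma sublatticeSignMatrix_mul_self (d : ℕ) (Λ : Finset (Fin d → ℤ)) :
    sublatticeSignMatrix d Λ * sublatticeSignMatrix d Λ = 1 := by
  simp [sublatticeSignMatrix, Matrix.diagonal_mul_diagonal, sublatticeSign_mul_self]

lemma hop_self {d : ℕ} (x : Fin d → ℤ) : hop d x x = 0 := by simp [hop]

lemma fkh_apply {d : ℕ} (U : ℝ) (Λ : Finset (Fin d → ℤ)) (ω : (Fin d → ℤ) → ℕ) (x y : Λ) :
    fkh d U Λ ω x y = -hop d x y - U * ω x * (1 : Matrix Λ Λ ℝ) x y := by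
  simp [fkh, Matrix.one_apply]

lemma sublatticeSignMatrix_conj_fkh_compl (d : ℕ) (U : ℝ) (Λ : Finset (Fin d → ℤ))
    (ω : (Fin d → ℤ) → ℕ) (hω : ∀ x, ω x ≤ 1) :
    sublatticeSignMatrix d Λ * fkh d U Λ (fun x => 1 - ω x) * sublatticeSignMatrix d Λ
      = -fkh d U Λ ω - U • 1 := by
  ext x y
  rw [sublatticeSignMatrix, Matrix.mul_diagonal, Matrix.diagonal_mul]
  by_cases hxy : x = y
  · subst hxy
    have hε := sublatticeSign_mul_self (x : Fin d → ℤ)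
    simp only [fkh_apply, hop_self, Matrix.one_apply_eq, Nat.cast_sub (hω _), Matrix.sub_apply,
      Matrix.neg_apply, Matrix.smul_apply, smul_eq_mul]
    linear_combination (-(U * (1 - (ω x : ℝ)))) * hε
  · simp only [fkh_apply, Matrix.one_apply_ne hxy, Matrix.sub_apply, Matrix.neg_apply,
      Matrix.smul_apply, smul_eq_mul]
    by_cases hh : hop d x y = 0
    · simp [hh]
    · linear_combination (-hop d x y) * sublatticeSign_mul_of_hop_ne_zero hh

lemma trace_fkh (d : ℕ) (U : ℝ) (Λ : Finset (Fin d → ℤ)) (ω : (Fin d → ℤ) → ℕ) :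
    (fkh d U Λ ω).trace = -U * ∑ x ∈ Λ, (ω x : ℝ) := by
  simp [Matrix.trace, fkh_apply, hop_self, Finset.mul_sum,
    Finset.sum_attach Λ fun x => U * (ω x : ℝ)]

lemma charpoly_fkh_compl (d : ℕ) (U : ℝ) (Λ : Finset (Fin d → ℤ))
    (ω : (Fin d → ℤ) → ℕ) (hω : ∀ x, ω x ≤ 1) :
    (fkh d U Λ (fun x => 1 - ω x)).charpoly = (-fkh d U Λ ω - U • 1).charpoly := by
  rw [← sublatticeSignMatrix_conj_fkh_compl d U Λ ω hω,
    Matrix.charpoly_mul_mul_of_mul_self_eq_one (sublatticeSignMatrix_mul_self d Λ)]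

/-- Combining both particle-hole transformations:
`E^U(|Λ| - N_e, ω̄) = E^U(N_e, ω) + U (N_e + N_c(ω) - |Λ|)`, where `ω̄_x = 1 - ω_x`
and `E^U(N, ω)` is the sum of the `N` smallest eigenvalues of `h^U(ω)`. -/
theorem stmt7 (d : ℕ) (U : ℝ) (Λ : Finset (Fin d → ℤ))
    (ω : (Fin d → ℤ) → ℕ) (hω : ∀ x, ω x ≤ 1)
    (Ne : ℕ) (hNe : Ne ≤ Λ.card)
    (hH1 : (fkh d U Λ (fun x => 1 - ω x)).IsHermitian)
    (hH2 : (fkh d U Λ ω).IsHermitian)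
    (μ1 μ2 : Fin Λ.card → ℝ) (hm1 : Monotone μ1) (hm2 : Monotone μ2)
    (he1 : ∃ e : Fin Λ.card ≃ ↥Λ, ∀ j, μ1 j = hH1.eigenvalues (e j))
    (he2 : ∃ e : Fin Λ.card ≃ ↥Λ, ∀ j, μ2 j = hH2.eigenvalues (e j)) :
    ∑ j : Fin (Λ.card - Ne), μ1 (Fin.castLE (Nat.sub_le _ _) j)
      = ∑ j : Fin Ne, μ2 (Fin.castLE hNe j)
        + U * ((Ne : ℝ) + (∑ x ∈ Λ, ω x : ℕ) - Λ.card) := by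
  obtain ⟨e1, he1⟩ := he1
  obtain ⟨e2, he2⟩ := he2
  have hspec : univ.val.map μ1 = univ.val.map fun j : Fin Λ.card => -μ2 j.rev - U := by
    rw [← hH1.roots_charpoly_eq_map e1 he1, charpoly_fkh_compl d U Λ ω hω,
      hH2.roots_charpoly_neg_sub_smul_one_eq_map U e2 he2]
    exact (Multiset.map_univ_val_comp_equiv (fun j => -μ2 j - U) Fin.revPerm).symm
  have hrev : μ1 = fun j : Fin Λ.card => -μ2 j.rev - U :=
    hm1.eq_of_map_univ_val_eq ((hm2.comp_antitone Fin.rev_anti).neg.add_const (-U)) hspec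
  have htrace : ∑ j, μ2 j = -U * ∑ x ∈ Λ, (ω x : ℝ) := by
    rw [← trace_fkh, hH2.trace_eq_sum_eigenvalues, ← Equiv.sum_comp e2]
    simp [he2]
  simp only [hrev, Finset.sum_sub_distrib, Finset.sum_neg_distrib, Fin.sum_rev_castLE_eq_sub hNe,
    htrace, Finset.sum_const, Finset.card_fin, nsmul_eq_mul]
  push_cast [Nat.cast_sub hNe]
  ring
end

section
/- Let p, q be coprime positive integers with p < q, and r ≤ p. Define k_0, ..., k_{r-1} ∈ {0,...,q-1} by p·k_j ≡ j (mod q). Then the k_j are distinct, k_0 = 0, and for r = p, writing ℓ = ⌊q/p⌋ and q = (ℓ+1)p - s with 1 ≤ s ≤ p-1: (a) for 0 ≤ j ≤ s-1, k_j - ℓ ≡ k_{j+p-s} (mod q); (b) for s ≤ j ≤ p-1, k_j - (ℓ+1) ≡ k_{j-s} (mod q). -/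
/-- Let `p, q` be coprime with `1 ≤ p < q`, `r ≤ p`, and let
`k_0, …, k_{r-1} ∈ {0,…,q-1}` be defined by `p·k_j ≡ j (mod q)`. Then the `k_j` are
distinct, `k_0 = 0`, and for `r = p`, with `ℓ = ⌊q/p⌋` and `q = (ℓ+1)p - s`
(`1 ≤ s ≤ p-1`): (a) `k_j - ℓ ≡ k_{j+p-s} (mod q)` for `0 ≤ j ≤ s-1`;
(b) `k_j - (ℓ+1) ≡ k_{j-s} (mod q)` for `s ≤ j ≤ p-1`. -/
theorem stmt9 (p q r : ℕ) (hp : 0 < p) (hpq : p < q) (hcop : Nat.Coprime p q)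
    (hr : r ≤ p) (k : ℕ → ℕ) (hk : ∀ j < r, k j < q ∧ (p * k j) % q = j) :
    (∀ j₁ < r, ∀ j₂ < r, k j₁ = k j₂ → j₁ = j₂) ∧
    (0 < r → k 0 = 0) ∧
    (r = p → ∀ ℓ s : ℕ, ℓ = q / p → q + s = (ℓ + 1) * p → 1 ≤ s → s ≤ p - 1 →
      (∀ j < s, ((k j : ZMod q) - (ℓ : ZMod q)) = (k (j + p - s) : ZMod q)) ∧
      (∀ j, s ≤ j → j < p →
        ((k j : ZMod q) - ((ℓ : ZMod q) + 1)) = (k (j - s) : ZMod q))) := by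
  have hq0 : 0 < q := lt_trans hp hpq
  haveI : NeZero q := ⟨hq0.ne'⟩
  refine ⟨?_, ?_, ?_⟩
  · intro j₁ h₁ j₂ h₂ heq
    have e1 := (hk j₁ h₁).2
    have e2 := (hk j₂ h₂).2
    rw [← e1, ← e2, heq]
  · intro h0
    have e := (hk 0 h0).2
    have hd : q ∣ p * k 0 := Nat.dvd_of_mod_eq_zero e
    have hd' : q ∣ k 0 := (Nat.Coprime.dvd_of_dvd_mul_left hcop.symm hd)
    exact Nat.eq_zero_of_dvd_of_lt hd' (hk 0 h0).1
  · intro hrp ℓ s hℓ hqs hs1 hs2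
    have hu : IsUnit (p : ZMod q) := (ZMod.isUnit_iff_coprime p q).mpr hcop
    have hkey : ∀ j < p, (p : ZMod q) * (k j) = j := by
      intro j hj
      have e := (hk j (by omega)).2
      have : ((p * k j : ℕ) : ZMod q) = ((j : ℕ) : ZMod q) := by
        rw [← ZMod.natCast_mod, e]
      push_cast at this
      exact this
    have hsq : (s : ZMod q) = ((ℓ : ZMod q) + 1) * p := by
      have : ((q + s : ℕ) : ZMod q) = (((ℓ + 1) * p : ℕ) : ZMod q) := by rw [hqs]
      push_cast at this
      rw [ZMod.natCast_self] at this
      rw [zero_add] at this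
      exact this
    constructor
    · intro j hj
      refine hu.mul_left_cancel ?_
      have h1 := hkey j (by omega)
      have h2 := hkey (j + p - s) (by omega)
      rw [h2]
      have : ((j + p - s : ℕ) : ZMod q) = (j : ZMod q) + p - s := by
        push_cast [Nat.cast_sub (show s ≤ j + p by omega)]
        ring
      rw [this]
      linear_combination h1 + hsq
    · intro j hjs hjp
      refine hu.mul_left_cancel ?_
      have h1 := hkey j hjp
      have h2 := hkey (j - s) (by omega)
      rw [h2]
      have : ((j - s : ℕ) : ZMod q) = (j : ZMod q) - s := by
        push_cast [Nat.cast_sub hjs]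
        ring
      rw [this]
      linear_combination h1 + hsq
end

section
/- Let p, q be coprime with 1 ≤ p < q, and let k_0,...,k_{p-1} ∈ {0,...,q-1} solve p·k_j ≡ j (mod q). For each j, let L(k_j) be the gap from k_j to the nearest occupied site strictly to its left (cyclically, in the set {k_0,...,k_{p-1}} viewed in ℤ/qℤ). Then L(k_j) ∈ {ℓ, ℓ+1} for all j, where ℓ = ⌊q/p⌋; i.e., the configuration defined by the formula is homogeneous. -/
/-- Homogeneity of the configuration given by the "intriguing
formula". Let `p, q` be coprime, `1 ≤ p < q`, `p ∤ q`, and let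
`k_0, …, k_{p-1} ∈ {0,…,q-1}` solve `p·k_j ≡ j (mod q)`. Let `ℓ = ⌊q/p⌋` and
`q = (ℓ+1)p - s`, `1 ≤ s ≤ p-1`. Then for each `j`, the distance `L(k_j)` from
`k_j` to the nearest occupied site strictly to its left (cyclically in `ℤ/qℤ`) is
`ℓ` if `j < s` and `ℓ+1` if `s ≤ j < p`; in particular `L(k_j) ∈ {ℓ, ℓ+1}`. -/
theorem stmt11 (p q : ℕ) (hp : 0 < p) (hpq : p < q) (hcop : Nat.Coprime p q)
    (hnd : ¬ p ∣ q) (k : ℕ → ℕ) (hk : ∀ j < p, k j < q ∧ (p * k j) % q = j)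
    (ℓ s : ℕ) (hℓ : ℓ = q / p) (hs : q + s = (ℓ + 1) * p) :
    ∀ j < p,
      IsLeast {m : ℕ | 0 < m ∧
          ((k j : ZMod q) - (m : ZMod q)) ∈
            {x : ZMod q | ∃ i < p, x = (k i : ZMod q)}}
        (if j < s then ℓ else ℓ + 1) := by
  intro j hj
  have hq0 : 0 < q := hp.trans hpq
  haveI : NeZero q := ⟨hq0.ne'⟩
  have hdiv : q = p * ℓ + q % p := by rw [hℓ]; exact (Nat.div_add_mod q p).symm
  have hr0 : 0 < q % p := Nat.pos_of_ne_zero (fun h => hnd (Nat.dvd_of_mod_eq_zero h))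
  have hrp : q % p < p := Nat.mod_lt q hp
  have hℓ1 : 1 ≤ ℓ := by
    rw [hℓ]; exact (Nat.one_le_div_iff hp).2 hpq.le
  have hmul : (ℓ + 1) * p = p * ℓ + p := by ring
  have hsr : s + q % p = p := by omega
  have hunit : IsUnit (p : ZMod q) := (ZMod.isUnit_iff_coprime p q).2 hcop
  have hmulk : ∀ i, i < p → (p : ZMod q) * (k i : ZMod q) = (i : ZMod q) := by
    intro i hi
    have h2 := (hk i hi).2
    calc (p : ZMod q) * (k i : ZMod q) = ((p * k i : ℕ) : ZMod q) := by push_cast; ring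
      _ = (((p * k i) % q : ℕ) : ZMod q) := (ZMod.natCast_mod _ _).symm
      _ = (i : ZMod q) := by rw [h2]
  have hchar : ∀ x : ZMod q, (∃ i, i < p ∧ x = (k i : ZMod q)) ↔ ((p : ZMod q) * x).val < p := by
    intro x
    constructor
    · rintro ⟨i, hi, rfl⟩
      rw [hmulk i hi, ZMod.val_natCast_of_lt (hi.trans hpq)]
      exact hi
    · intro hv
      refine ⟨((p : ZMod q) * x).val, hv, ?_⟩
      apply hunit.mul_right_injective
      show (p : ZMod q) * x = (p : ZMod q) * ((k (((p : ZMod q) * x).val) : ℕ) : ZMod q)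
      rw [hmulk _ hv]
      simp [ZMod.natCast_val, ZMod.cast_id]
  have hmem : ∀ m : ℕ, (((k j : ZMod q) - (m : ZMod q)) ∈
      {x : ZMod q | ∃ i < p, x = (k i : ZMod q)}) ↔
      ((j : ZMod q) - ((p * m : ℕ) : ZMod q)).val < p := by
    intro m
    have hx : (p : ZMod q) * ((k j : ZMod q) - (m : ZMod q))
        = (j : ZMod q) - ((p * m : ℕ) : ZMod q) := by
      rw [mul_sub, hmulk j hj]; push_cast; ring
    rw [Set.mem_setOf_eq, hchar, hx]
  have hval : ∀ m, 1 ≤ m → m ≤ ℓ →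
      ((j : ZMod q) - ((p * m : ℕ) : ZMod q)).val = q + j - p * m := by
    intro m h1 h2
    have h3 : p * m ≤ p * ℓ := Nat.mul_le_mul_left p h2
    have h4 : j < p * m := hj.trans_le (Nat.le_mul_of_pos_right p h1)
    have h5 : q + j - p * m + p * m = q + j := by omega
    have heq : (j : ZMod q) - ((p * m : ℕ) : ZMod q) = ((q + j - p * m : ℕ) : ZMod q) := by
      rw [sub_eq_iff_eq_add, ← Nat.cast_add, h5, Nat.cast_add, ZMod.natCast_self, zero_add]
    rw [heq, ZMod.val_natCast_of_lt (by omega)]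
  -- condition fails for 1 ≤ m ≤ ℓ unless m = ℓ and j < s
  have hfail : ∀ m, 1 ≤ m → m ≤ ℓ →
      ((j : ZMod q) - ((p * m : ℕ) : ZMod q)).val < p → m = ℓ ∧ j < s := by
    intro m h1 h2 hv
    rw [hval m h1 h2] at hv
    have h3 : p * m ≤ p * ℓ := Nat.mul_le_mul_left p h2
    constructor
    · by_contra hne
      have h4 : p * (m + 1) ≤ p * ℓ := Nat.mul_le_mul_left p (by omega)
      have h5 : p * (m + 1) = p * m + p := by ring
      omega
    · omega
  split_ifs with hjs
  · constructor
    · refine ⟨by omega, ?_⟩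
      rw [hmem ℓ, hval ℓ hℓ1 le_rfl]
      have h3 : p * ℓ ≤ q := by omega
      omega
    · rintro m ⟨hm0, hmv⟩
      rw [hmem m] at hmv
      by_contra hlt
      push_neg at hlt
      exact absurd ((hfail m hm0 (by omega) hmv).1) (by omega)
  · constructor
    · refine ⟨by omega, ?_⟩
      rw [hmem (ℓ + 1)]
      have hps : p * (ℓ + 1) = q + s := by rw [mul_comm]; exact hs.symm
      have hjs' : s ≤ j := le_of_not_gt hjs
      have heq : (j : ZMod q) - ((p * (ℓ + 1) : ℕ) : ZMod q) = ((j - s : ℕ) : ZMod q) := by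
        rw [hps, Nat.cast_add, ZMod.natCast_self, zero_add, ← Nat.cast_sub hjs']
      rw [heq, ZMod.val_natCast_of_lt (by omega)]
      omega
    · rintro m ⟨hm0, hmv⟩
      rw [hmem m] at hmv
      by_contra hlt
      push_neg at hlt
      have := hfail m hm0 (by omega) hmv
      omega
end

section
/- Let e(μ_e, μ_c, ω) be concave in μ_e and linear in μ_c for each ω, with -∂e/∂μ_e = ρ_e(μ_e, ω) and -∂e/∂μ_c = ρ_c(ω). Suppose ω minimizes e(μ_e,μ_c,·) but not e(μ_e',μ_c',·), and ω' minimizes e(μ_e',μ_c',·) but not e(μ_e,μ_c,·). Then (μ_e' - μ_e)[ρ_e(μ_e',ω') - ρ_e(μ_e,ω)] + (μ_c' - μ_c)[ρ_c(ω') - ρ_c(ω)] ≥ 0. In particular: if μ_e = μ_e' and μ_c' > μ_c then ρ_c(ω') > ρ_c(ω); if μ_c = μ_c' and μ_e' > μ_e then ρ_e(μ_e',ω') > ρ_e(μ_e,ω). -/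
/-- Abstract thermodynamic monotonicity. Suppose the
grand-canonical energy `e(μ_e, μ_c, ω)` satisfies the subgradient (concavity)
inequality with densities `ρ_e(μ_e, ω) = -∂e/∂μ_e`, `ρ_c(ω) = -∂e/∂μ_c`. If `ω` is
strictly better than `ω'` at `(μ_e, μ_c)` and `ω'` strictly better than `ω` at
`(μ_e', μ_c')`, then
`(μ_e'-μ_e)[ρ_e(μ_e',ω') - ρ_e(μ_e,ω)] + (μ_c'-μ_c)[ρ_c(ω') - ρ_c(ω)] ≥ 0`;
in particular, if `μ_e = μ_e'` and `μ_c < μ_c'` then `ρ_c(ω) < ρ_c(ω')`, and if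
`μ_c = μ_c'` and `μ_e < μ_e'` then `ρ_e(μ_e,ω) < ρ_e(μ_e',ω')`. -/
theorem stmt14 {Ω : Type*} (e : ℝ → ℝ → Ω → ℝ) (ρe : ℝ → Ω → ℝ) (ρc : Ω → ℝ)
    (hsub : ∀ μe μe' μc μc' : ℝ, ∀ ω : Ω,
      e μe' μc' ω ≤ e μe μc ω + (μe - μe') * ρe μe ω + (μc - μc') * ρc ω)
    (μe μc μe' μc' : ℝ) (ω ω' : Ω)
    (h1 : e μe μc ω < e μe μc ω') (h2 : e μe' μc' ω' < e μe' μc' ω) :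
    0 ≤ (μe' - μe) * (ρe μe' ω' - ρe μe ω) + (μc' - μc) * (ρc ω' - ρc ω) ∧
    (μe = μe' → μc < μc' → ρc ω < ρc ω') ∧
    (μc = μc' → μe < μe' → ρe μe ω < ρe μe' ω') := by
  have A := hsub μe μe' μc μc' ω
  have B := hsub μe' μe μc' μc ω'
  refine ⟨by nlinarith, ?_, ?_⟩
  · rintro rfl h
    nlinarith
  · rintro rfl h
    nlinarith
end
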